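/- arXiv:2309.02938 — 6 statements merged into one kernel-verified Lean document; each statement's English description precedes it below -/
import Mathlib

section
/- Let G = (V, E) and G' = (V, E') be two simple directed graphs with the same underlying undirected graph, and let D = (E' \ E) ∪ (E \ E') be their symmetric difference. Let N = nbhd(D) be the union over edges (i,j) ∈ D of the sets {i, j} ∪ ((In(i) ∪ Out(i)) ∩ (In(j) ∪ Out(j))). Then every simplex of G that is not a simplex of the induced subgraph G[N] is also a simplex of G', and symmetrically every simplex of G' not in G'[N] is a simplex of G. Consequently, the set of simplices of G' equals the disjoint union of the simplices of G'[N] with the simplices of G that are not simplices of G[N]. -/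
variable {V : Type*} [Fintype V] [DecidableEq V]

/-- The underlying undirected graph: the projection of a directed edge set to unordered pairs. -/
def prG (E : Finset (V × V)) : Finset (Sym2 V) := E.image fun p => s(p.1, p.2)

/-- Vertices with an edge into `i`. -/
def inSet (E : Finset (V × V)) (i : V) : Finset V := Finset.univ.filter fun v => (v, i) ∈ E

/-- Vertices with an edge out of `i`. -/
def outSet (E : Finset (V × V)) (i : V) : Finset V := Finset.univ.filter fun v => (i, v) ∈ E

/-- The neighbourhood of a set `D` of edges (Definition 2.8). -/
def nbhd (E D : Finset (V × V)) : Finset V :=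
  D.biUnion fun p =>
    {p.1, p.2} ∪ ((inSet E p.1 ∪ outSet E p.1) ∩ (inSet E p.2 ∪ outSet E p.2))

/-- A `d`-simplex of the graph with edge set `E`, encoded as an injective enumeration of its
vertices with all edges pointing from lower to higher positions. -/
def IsSimplex (E : Finset (V × V)) {d : ℕ} (f : Fin (d+1) → V) : Prop :=
  Function.Injective f ∧ ∀ i j : Fin (d+1), i < j → (f i, f j) ∈ E

/-- A `d`-simplex of the induced subgraph on the vertex set `N`. -/
def IsSimplexIn (E : Finset (V × V)) (N : Finset V) {d : ℕ} (f : Fin (d+1) → V) : Prop :=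
  (∀ i, f i ∈ N) ∧ IsSimplex E f

lemma adj_of_prG {E : Finset (V × V)} {a b : V} (h : s(a, b) ∈ prG E) :
    (a, b) ∈ E ∨ (b, a) ∈ E := by
  rw [prG, Finset.mem_image] at h
  obtain ⟨p, hp, hs⟩ := h
  rw [Sym2.eq_iff] at hs
  rcases hs with ⟨h1, h2⟩ | ⟨h1, h2⟩
  · left; rwa [← h1, ← h2]; 
  · right; rwa [← h2, ← h1]

lemma mem_adjSet {E : Finset (V × V)} {a b : V} (h : (a, b) ∈ E ∨ (b, a) ∈ E) :
    a ∈ inSet E b ∪ outSet E b := by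
  rw [Finset.mem_union, inSet, outSet, Finset.mem_filter, Finset.mem_filter]
  rcases h with h | h
  · exact Or.inl ⟨Finset.mem_univ _, h⟩
  · exact Or.inr ⟨Finset.mem_univ _, h⟩

lemma edges_not_in_D {E E'' D : Finset (V × V)} (hpr : prG E = prG E'')
    {d : ℕ} {f : Fin (d+1) → V} (hf : IsSimplex E'' f)
    {k : Fin (d+1)} (hk : f k ∉ nbhd E D)
    {i j : Fin (d+1)} (hij : i < j) : (f i, f j) ∉ D := by
  intro hmem
  apply hk
  rw [nbhd, Finset.mem_biUnion]
  refine ⟨(f i, f j), hmem, ?_⟩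
  rw [Finset.mem_union, Finset.mem_insert, Finset.mem_singleton, Finset.mem_inter]
  by_cases hki : k = i
  · exact Or.inl (Or.inl (by rw [hki]))
  by_cases hkj : k = j
  · exact Or.inl (Or.inr (by rw [hkj]))
  have adj : ∀ m : Fin (d+1), k ≠ m → f k ∈ inSet E (f m) ∪ outSet E (f m) := by
    intro m hkm
    have hE'' : (f k, f m) ∈ E'' ∨ (f m, f k) ∈ E'' := by
      rcases lt_or_gt_of_ne hkm with h | h
      · exact Or.inl (hf.2 _ _ h)
      · exact Or.inr (hf.2 _ _ h)
    have hsym : s(f k, f m) ∈ prG E := by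
      rw [hpr, prG, Finset.mem_image]
      rcases hE'' with h | h
      · exact ⟨(f k, f m), h, rfl⟩
      · exact ⟨(f m, f k), h, Sym2.eq_swap⟩
    exact mem_adjSet (adj_of_prG hsym)
  exact Or.inr ⟨adj i hki, adj j hkj⟩

/-- locality of directed flag complexes, Lemma 2.9: if `G = (V,E)` and
`G' = (V,E')` have the same underlying undirected graph, `D` is the symmetric difference of
the edge sets and `N = nbhd(D)`, then every simplex of `G` not lying in `G[N]` is a simplex
of `G'` and vice versa; consequently the simplices of `G'` are the disjoint union of the
simplices of `G'[N]` and the simplices of `G` outside `G[N]`. -/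
theorem flag_complex_locality (E E' : Finset (V × V))
    (hE : ∀ p ∈ E, p.1 ≠ p.2) (hE' : ∀ p ∈ E', p.1 ≠ p.2)
    (hpr : prG E = prG E')
    (D : Finset (V × V)) (hD : D = (E' \ E) ∪ (E \ E'))
    (N : Finset V) (hN : N = nbhd E D) :
    (∀ (d : ℕ) (f : Fin (d+1) → V),
        IsSimplex E f → ¬ IsSimplexIn E N f → IsSimplex E' f) ∧
    (∀ (d : ℕ) (f : Fin (d+1) → V),
        IsSimplex E' f → ¬ IsSimplexIn E' N f → IsSimplex E f) ∧
    (∀ (d : ℕ) (f : Fin (d+1) → V),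
        IsSimplex E' f ↔
          (IsSimplexIn E' N f ∨ (IsSimplex E f ∧ ¬ IsSimplexIn E N f))) ∧
    (∀ (d : ℕ) (f : Fin (d+1) → V),
        ¬ (IsSimplexIn E' N f ∧ (IsSimplex E f ∧ ¬ IsSimplexIn E N f))) := by

  subst hD hN
  have part1 : ∀ (d : ℕ) (f : Fin (d+1) → V),
      IsSimplex E f → ¬ IsSimplexIn E (nbhd E ((E' \ E) ∪ (E \ E'))) f → IsSimplex E' f := by
    intro d f hf hnot
    have hk : ∃ k, f k ∉ nbhd E ((E' \ E) ∪ (E \ E')) := by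
      by_contra h
      push_neg at h
      exact hnot ⟨h, hf⟩
    obtain ⟨k, hk⟩ := hk
    refine ⟨hf.1, fun i j hij => ?_⟩
    have hD := edges_not_in_D (E'' := E) rfl hf hk hij
    have hE0 := hf.2 i j hij
    by_contra h
    exact hD (Finset.mem_union_right _ (Finset.mem_sdiff.2 ⟨hE0, h⟩))
  have part2 : ∀ (d : ℕ) (f : Fin (d+1) → V),
      IsSimplex E' f → ¬ IsSimplexIn E' (nbhd E ((E' \ E) ∪ (E \ E'))) f → IsSimplex E f := by
    intro d f hf hnot
    have hk : ∃ k, f k ∉ nbhd E ((E' \ E) ∪ (E \ E')) := by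
      by_contra h
      push_neg at h
      exact hnot ⟨h, hf⟩
    obtain ⟨k, hk⟩ := hk
    refine ⟨hf.1, fun i j hij => ?_⟩
    have hD := edges_not_in_D hpr hf hk hij
    have hE0 := hf.2 i j hij
    by_contra h
    exact hD (Finset.mem_union_left _ (Finset.mem_sdiff.2 ⟨hE0, h⟩))
  refine ⟨part1, part2, ?_, ?_⟩
  · intro d f
    constructor
    · intro hf
      by_cases hall : ∀ i, f i ∈ nbhd E ((E' \ E) ∪ (E \ E'))
      · exact Or.inl ⟨hall, hf⟩
      · have hnot : ¬ IsSimplexIn E' (nbhd E ((E' \ E) ∪ (E \ E'))) f :=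
          fun h => hall h.1
        have hE0 := part2 d f hf hnot
        exact Or.inr ⟨hE0, fun h => hall h.1⟩
    · rintro (h | ⟨h1, h2⟩)
      · exact h.2
      · exact part1 d f h1 h2
  · rintro d f ⟨h1, h2, h3⟩
    exact h3 ⟨h1.1, h2⟩
end

section
/- Let G = (V, E) and G' = (V, E') be simple directed graphs with the same underlying undirected graph, let D be the symmetric difference of E and E', and let N = nbhd(D) as above. Then the number of d-simplices of G' equals s_d(G) + s_d(G'[N]) − s_d(G[N]) for every dimension d, where s_d counts d-simplices. -/
variable {V : Type*} [Fintype V] [DecidableEq V]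

/-- The number of `d`-simplices of the subgraph of `(V, E)` induced on the vertex set `N`:
injective enumerations of `d+1` vertices of `N` with all edges from lower to higher
positions.  Taking `N = Finset.univ` counts the `d`-simplices of the whole graph. -/
def simplexCount (E : Finset (V × V)) (N : Finset V) (d : ℕ) : ℕ :=
  Fintype.card {f : Fin (d+1) → V // Function.Injective f ∧ (∀ i, f i ∈ N) ∧
    ∀ i j : Fin (d+1), i < j → (f i, f j) ∈ E}

/-- if `G = (V,E)` and `G' = (V,E')` have the same underlying undirected graph,
`D` is the symmetric difference of the edge sets and `N = nbhd(D)`, then for every dimension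
`d` we have `s_d(G') = s_d(G) + s_d(G'[N]) − s_d(G[N])`, stated additively as
`s_d(G') + s_d(G[N]) = s_d(G) + s_d(G'[N])`. -/
theorem simplex_count_locality (E E' : Finset (V × V))
    (hE : ∀ p ∈ E, p.1 ≠ p.2) (hE' : ∀ p ∈ E', p.1 ≠ p.2)
    (hpr : prG E = prG E')
    (D : Finset (V × V)) (hD : D = (E' \ E) ∪ (E \ E'))
    (N : Finset V) (hN : N = nbhd E D) (d : ℕ) :
    simplexCount E' Finset.univ d + simplexCount E N d
      = simplexCount E Finset.univ d + simplexCount E' N d := by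
  classical
  -- membership helper for `nbhd`
  have hmem : ∀ a b c : V, (a, b) ∈ D → ((c, a) ∈ E ∨ (a, c) ∈ E) →
      ((c, b) ∈ E ∨ (b, c) ∈ E) → c ∈ N := by
    intro a b c hab ha hb
    subst hN
    refine Finset.mem_biUnion.2 ⟨(a, b), hab, ?_⟩
    simp only [Finset.mem_union, Finset.mem_inter, Finset.mem_insert, Finset.mem_singleton,
      inSet, outSet, Finset.mem_filter, Finset.mem_univ, true_and]
    tauto
  have hend : ∀ a b : V, (a, b) ∈ D → a ∈ N ∧ b ∈ N := by
    intro a b hab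
    subst hN
    constructor <;>
    · refine Finset.mem_biUnion.2 ⟨(a, b), hab, ?_⟩
      simp
  -- orientation transfer via the common underlying undirected graph
  have hsym : ∀ a b : V, (a, b) ∈ E' → (a, b) ∈ E ∨ (b, a) ∈ E := by
    intro a b h
    have : s(a, b) ∈ prG E := by
      rw [hpr]
      exact Finset.mem_image.2 ⟨(a, b), h, rfl⟩
    obtain ⟨⟨x, y⟩, hxy, hs⟩ := Finset.mem_image.1 this
    rcases Sym2.eq_iff.1 hs with ⟨h1, h2⟩ | ⟨h1, h2⟩
    · left; rw [← h1, ← h2]; exact hxy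
    · right; rw [← h1, ← h2]; exact hxy
  -- key: a simplex with a vertex outside N is a simplex of E iff of E'
  have hkey : ∀ f : Fin (d+1) → V, (¬ ∀ i, f i ∈ N) →
      ((∀ i j : Fin (d+1), i < j → (f i, f j) ∈ E') ↔
        (∀ i j : Fin (d+1), i < j → (f i, f j) ∈ E)) := by
    intro f hf
    push_neg at hf
    obtain ⟨k, hk⟩ := hf
    constructor
    · intro h i j hij
      by_contra hne
      have hD' : (f i, f j) ∈ D := by
        rw [hD]
        exact Finset.mem_union_left _ (Finset.mem_sdiff.2 ⟨h i j hij, hne⟩)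
      have hki : k ≠ i := fun e => hk (by rw [e]; exact (hend _ _ hD').1)
      have hkj : k ≠ j := fun e => hk (by rw [e]; exact (hend _ _ hD').2)
      refine hk (hmem _ _ _ hD' ?_ ?_)
      · rcases lt_or_gt_of_ne hki with h1 | h1
        · exact hsym _ _ (h k i h1)
        · exact (hsym _ _ (h i k h1)).symm
      · rcases lt_or_gt_of_ne hkj with h1 | h1
        · exact hsym _ _ (h k j h1)
        · exact (hsym _ _ (h j k h1)).symm
    · intro h i j hij
      by_contra hne
      have hD' : (f i, f j) ∈ D := by
        rw [hD]
        exact Finset.mem_union_right _ (Finset.mem_sdiff.2 ⟨h i j hij, hne⟩)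
      have hki : k ≠ i := fun e => hk (by rw [e]; exact (hend _ _ hD').1)
      have hkj : k ≠ j := fun e => hk (by rw [e]; exact (hend _ _ hD').2)
      refine hk (hmem _ _ _ hD' ?_ ?_)
      · rcases lt_or_gt_of_ne hki with h1 | h1
        · exact Or.inl (h k i h1)
        · exact Or.inr (h i k h1)
      · rcases lt_or_gt_of_ne hkj with h1 | h1
        · exact Or.inl (h k j h1)
        · exact Or.inr (h j k h1)
  -- counting
  have hcount : ∀ E₀ : Finset (V × V),
      simplexCount E₀ Finset.univ d = simplexCount E₀ N d +
        (Finset.univ.filter fun f : Fin (d+1) → V =>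
          (Function.Injective f ∧ ∀ i j : Fin (d+1), i < j → (f i, f j) ∈ E₀) ∧
            ¬ ∀ i, f i ∈ N).card := by
    intro E₀
    rw [simplexCount, simplexCount, Fintype.card_subtype, Fintype.card_subtype]
    have hsplit := Finset.card_filter_add_card_filter_not
      (s := Finset.univ.filter fun f : Fin (d+1) → V =>
        Function.Injective f ∧ ∀ i j : Fin (d+1), i < j → (f i, f j) ∈ E₀)
      (p := fun f => ∀ i, f i ∈ N)
    rw [Finset.filter_filter, Finset.filter_filter] at hsplit
    have e1 : (Finset.univ.filter fun f : Fin (d+1) → V =>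
        (Function.Injective f ∧ ∀ i j : Fin (d+1), i < j → (f i, f j) ∈ E₀) ∧ ∀ i, f i ∈ N)
        = Finset.univ.filter fun f : Fin (d+1) → V =>
          Function.Injective f ∧ (∀ i, f i ∈ N) ∧
            ∀ i j : Fin (d+1), i < j → (f i, f j) ∈ E₀ := by
      apply Finset.filter_congr
      intro f _
      tauto
    have e2 : (Finset.univ.filter fun f : Fin (d+1) → V =>
        Function.Injective f ∧ (∀ i, f i ∈ (Finset.univ : Finset V)) ∧
          ∀ i j : Fin (d+1), i < j → (f i, f j) ∈ E₀)
        = Finset.univ.filter fun f : Fin (d+1) → V =>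
          Function.Injective f ∧ ∀ i j : Fin (d+1), i < j → (f i, f j) ∈ E₀ := by
      apply Finset.filter_congr
      intro f _
      simp
    rw [e2, ← hsplit, e1]
  have hEq : (Finset.univ.filter fun f : Fin (d+1) → V =>
        (Function.Injective f ∧ ∀ i j : Fin (d+1), i < j → (f i, f j) ∈ E') ∧
          ¬ ∀ i, f i ∈ N)
      = Finset.univ.filter fun f : Fin (d+1) → V =>
        (Function.Injective f ∧ ∀ i j : Fin (d+1), i < j → (f i, f j) ∈ E) ∧
          ¬ ∀ i, f i ∈ N := by
    apply Finset.filter_congr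
    intro f _
    constructor
    · rintro ⟨⟨hinj, hedge⟩, hnall⟩
      exact ⟨⟨hinj, (hkey f hnall).1 hedge⟩, hnall⟩
    · rintro ⟨⟨hinj, hedge⟩, hnall⟩
      exact ⟨⟨hinj, (hkey f hnall).2 hedge⟩, hnall⟩
  rw [hcount E, hcount E']
  have hc := congrArg Finset.card hEq
  rw [hc]
  ring
end

section
/- Any two simple directed graphs with the same underlying undirected graph and the same number of directed edges are connected by a finite sequence of single edge flips and double edge moves. Equivalently: fix an undirected graph U and a number m of directed edges; then the set of orientations-with-possible-double-edges of U having exactly m directed edges is connected under SEF and DEM. -/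
variable {V : Type*} [DecidableEq V]

/-- A simple move on the edge set of a directed graph: either a single edge flip (SEF), which
replaces a single edge `(i,j)` (one whose reverse is absent) by `(j,i)`, or a double edge move
(DEM), which deletes one direction `(k,l)` of a double edge and adds the reverse `(j,i)` of a
single edge `(i,j)`. -/
def SimpleMove (E E' : Finset (V × V)) : Prop :=
  (∃ i j : V, (i, j) ∈ E ∧ (j, i) ∉ E ∧ E' = insert (j, i) (E.erase (i, j))) ∨
  (∃ i j k l : V, (i, j) ∈ E ∧ (j, i) ∉ E ∧ (k, l) ∈ E ∧ (l, k) ∈ E ∧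
      s(i, j) ≠ s(k, l) ∧ E' = insert (j, i) (E.erase (k, l)))

/-!
Induct on the number of directed edges of `E` missing from `E'`. Take such an edge `(a, b)`;
since `E` and `E'` have the same underlying graph, `(b, a) ∈ E'`. If `(b, a) ∉ E`, a single edge
flip turns `(a, b)` into `(b, a)`. Otherwise `{a, b}` is a double edge of `E`; as the edge counts
agree, `E'` has an edge `(c, d) ∉ E`, so `(d, c)` is a single edge of `E`, and the double edge
move dropping `(a, b)` and adding `(c, d)` applies. Either move exchanges an edge of `E \ E'` for
one of `E' \ E` and keeps the underlying graph.
-/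

namespace Finset

variable {α : Type*} [DecidableEq α] {s t : Finset α} {x y : α}

theorem card_insert_erase_of_notMem (hx : x ∉ s) (hy : y ∈ s) : #(insert x (s.erase y)) = #s := by
  rw [card_insert_of_notMem fun h => hx (mem_of_mem_erase h), card_erase_add_one hy]

theorem card_insert_erase_sdiff_lt (hx : x ∈ t) (hy : y ∈ s \ t) :
    #(insert x (s.erase y) \ t) < #(s \ t) := by
  rw [insert_sdiff_of_mem _ hx, erase_sdiff_comm]
  exact card_erase_lt_of_mem hy

theorem sdiff_nonempty_of_card_eq_of_ne (hcard : #s = #t) (hne : s ≠ t) : (s \ t).Nonempty :=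
  sdiff_nonempty.2 fun h => hne (eq_of_subset_of_card_le h hcard.ge)

end Finset

namespace SimpleMove

open Finset

variable {E E' : Finset (V × V)} {a b c d : V}

/-- The underlying undirected graph `pr(E)`. -/
abbrev undirected (E : Finset (V × V)) : Finset (Sym2 V) := E.image fun p => s(p.1, p.2)

theorem mk_mem_undirected : s(a, b) ∈ undirected E ↔ (a, b) ∈ E ∨ (b, a) ∈ E := by
  simp only [mem_image, Prod.exists, Sym2.eq_iff]
  grind

theorem swap_mem_of_undirected_eq (hpr : undirected E = undirected E') (h : (a, b) ∈ E)
    (h' : (a, b) ∉ E') : (b, a) ∈ E' :=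
  (mk_mem_undirected.1 (hpr ▸ mk_mem_undirected.2 (Or.inl h))).resolve_left h'

theorem undirected_insert_swap_erase (h : (a, b) ∈ E) :
    undirected (insert (b, a) (E.erase (a, b))) = undirected E := by
  ext z
  induction z using Sym2.ind
  simp only [mk_mem_undirected, mem_insert, mem_erase]
  grind

theorem undirected_insert_erase_of_swap_mem (hab : a ≠ b) (hba : (b, a) ∈ E)
    (hcd : s(c, d) ∈ undirected E) :
    undirected (insert (c, d) (E.erase (a, b))) = undirected E := by
  rw [mk_mem_undirected] at hcd
  ext z
  induction z using Sym2.ind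
  simp only [mk_mem_undirected, mem_insert, mem_erase]
  grind

theorem exists_simpleMove_card_sdiff_lt (hpr : undirected E = undirected E') (hcard : #E = #E')
    (hne : E ≠ E') :
    ∃ E₁, SimpleMove E E₁ ∧ undirected E₁ = undirected E' ∧ #E₁ = #E' ∧
      #(E₁ \ E') < #(E \ E') := by
  obtain ⟨⟨a, b⟩, hab⟩ := sdiff_nonempty_of_card_eq_of_ne hcard hne
  obtain ⟨habE, habE'⟩ := mem_sdiff.1 hab
  have hbaE' : (b, a) ∈ E' := swap_mem_of_undirected_eq hpr habE habE'
  by_cases hbaE : (b, a) ∈ E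
  case neg =>
    exact ⟨insert (b, a) (E.erase (a, b)), Or.inl ⟨a, b, habE, hbaE, rfl⟩,
      (undirected_insert_swap_erase habE).trans hpr,
      (card_insert_erase_of_notMem hbaE habE).trans hcard, card_insert_erase_sdiff_lt hbaE' hab⟩
  case pos =>
    obtain ⟨⟨c, d⟩, hcd⟩ := sdiff_nonempty_of_card_eq_of_ne hcard.symm (Ne.symm hne)
    obtain ⟨hcdE', hcdE⟩ := mem_sdiff.1 hcd
    have hdcE : (d, c) ∈ E := swap_mem_of_undirected_eq hpr.symm hcdE' hcdE
    have hne_ab : a ≠ b := by rintro rfl; exact habE' hbaE'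
    have hsym : s(d, c) ≠ s(a, b) := by
      rw [Ne, Sym2.eq_iff]; rintro (⟨rfl, rfl⟩ | ⟨rfl, rfl⟩) <;> contradiction
    refine ⟨insert (c, d) (E.erase (a, b)), Or.inr ⟨d, c, a, b, hdcE, hcdE, habE, hbaE, hsym, rfl⟩,
      ?_, (card_insert_erase_of_notMem hcdE habE).trans hcard, card_insert_erase_sdiff_lt hcdE' hab⟩
    rw [undirected_insert_erase_of_swap_mem hne_ab hbaE (mk_mem_undirected.2 (Or.inr hdcE)), hpr]

end SimpleMove

theorem simple_moves_connect_general (E E' : Finset (V × V))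
    (hpr : E.image (fun p => s(p.1, p.2)) = E'.image (fun p => s(p.1, p.2)))
    (hcard : E.card = E'.card) :
    Relation.ReflTransGen SimpleMove E E' := by
  induction h : (E \ E').card using Nat.strong_induction_on generalizing E with
  | _ n ih =>
    by_cases hne : E = E'
    · exact hne ▸ .refl
    obtain ⟨E₁, hmove, hpr₁, hcard₁, hlt⟩ :=
      SimpleMove.exists_simpleMove_card_sdiff_lt hpr hcard hne
    exact .head hmove (ih _ (h ▸ hlt) E₁ hpr₁ hcard₁ rfl)

/-- irreducibility: any two simple directed graphs with the same underlying
undirected graph and the same number of directed edges are connected by a finite sequence of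
single edge flips and double edge moves. -/
theorem simple_moves_connect (E E' : Finset (V × V))
    (hE : ∀ p ∈ E, p.1 ≠ p.2) (hE' : ∀ p ∈ E', p.1 ≠ p.2)
    (hpr : E.image (fun p => s(p.1, p.2)) = E'.image (fun p => s(p.1, p.2)))
    (hcard : E.card = E'.card) :
    Relation.ReflTransGen SimpleMove E E' :=
  simple_moves_connect_general E E' hpr hcard
end

section
/- Clique Swap preserves the underlying undirected graph: with G, V_1, V_2, π, E_1, E_2 as in the Clique Swap definition and assuming V_1 and V_2 each induce cliques (every pair of distinct vertices within V_i is joined by at least one directed edge of E), the graph G' = (V, (E \ (E_1 ∪ E_2)) ∪ π(E_1 ∪ E_2)) satisfies pr(G') = pr(G). -/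
/-- Clique Swap preserves the underlying undirected graph.  With `V1`, `V2`
equal-sized cliques, `E1`, `E2` the induced edge sets, and `π` a permutation of `V` swapping
`V1` and `V2` and fixing everything outside `V1 ∪ V2`, the new graph
`E' = (E \ (E1 ∪ E2)) ∪ π(E1 ∪ E2)` has the same underlying undirected graph as `E`. -/
theorem clique_swap_pr {V : Type*} [Fintype V] [DecidableEq V]
    (E : Finset (V × V)) (hloop : ∀ p ∈ E, p.1 ≠ p.2)
    (V1 V2 : Finset V) (hsize : V1.card = V2.card)
    (hcl1 : ∀ i ∈ V1, ∀ j ∈ V1, i ≠ j → (i, j) ∈ E ∨ (j, i) ∈ E)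
    (hcl2 : ∀ i ∈ V2, ∀ j ∈ V2, i ≠ j → (i, j) ∈ E ∨ (j, i) ∈ E)
    (π : Equiv.Perm V) (hπ1 : ∀ v ∈ V1, π v ∈ V2) (hπ2 : ∀ v ∈ V2, π v ∈ V1)
    (hfix : ∀ v, v ∉ V1 ∪ V2 → π v = v)
    (E1 : Finset (V × V)) (hE1 : E1 = E.filter fun p => p.1 ∈ V1 ∧ p.2 ∈ V1)
    (E2 : Finset (V × V)) (hE2 : E2 = E.filter fun p => p.1 ∈ V2 ∧ p.2 ∈ V2)
    (E' : Finset (V × V))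
    (hE' : E' = (E \ (E1 ∪ E2)) ∪ (E1 ∪ E2).image fun p => (π p.1, π p.2)) :
    E'.image (fun p => s(p.1, p.2)) = E.image (fun p => s(p.1, p.2)) := by
  -- π.symm maps V1 into V2
  have himg : V2.image π = V1 := by
    apply Finset.eq_of_subset_of_card_le
    · intro x hx
      rcases Finset.mem_image.mp hx with ⟨v, hv, rfl⟩
      exact hπ2 v hv
    · rw [Finset.card_image_of_injective _ π.injective]; omega
  have hsym : ∀ i ∈ V1, π.symm i ∈ V2 := by
    intro i hi
    rw [← himg] at hi
    rcases Finset.mem_image.mp hi with ⟨v, hv, hv2⟩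
    rwa [← hv2, Equiv.symm_apply_apply]
  have hsub : E1 ∪ E2 ⊆ E := by
    intro p hp
    rcases Finset.mem_union.mp hp with h | h
    · exact Finset.mem_of_mem_filter p (hE1 ▸ h)
    · exact Finset.mem_of_mem_filter p (hE2 ▸ h)
  -- key: the Sym2 image of π(E1 ∪ E2) equals that of E1 ∪ E2
  have key : ((E1 ∪ E2).image fun p => (π p.1, π p.2)).image (fun p => s(p.1, p.2))
      = (E1 ∪ E2).image (fun p => s(p.1, p.2)) := by
    apply Finset.Subset.antisymm
    · intro s hs
      rcases Finset.mem_image.mp hs with ⟨q, hq, rfl⟩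
      rcases Finset.mem_image.mp hq with ⟨p, hp, rfl⟩
      have hne : p.1 ≠ p.2 := hloop p (hsub hp)
      have hπne : π p.1 ≠ π p.2 := fun h => hne (π.injective h)
      rcases Finset.mem_union.mp hp with h | h
      · rw [hE1] at h
        obtain ⟨h1, h2⟩ := (Finset.mem_filter.mp h).2
        rcases hcl2 _ (hπ1 _ h1) _ (hπ1 _ h2) hπne with he | he
        · refine Finset.mem_image.mpr ⟨(π p.1, π p.2), ?_, rfl⟩
          exact Finset.mem_union_right _ (hE2 ▸ Finset.mem_filter.mpr
            ⟨he, hπ1 _ h1, hπ1 _ h2⟩)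
        · refine Finset.mem_image.mpr ⟨(π p.2, π p.1), ?_, Sym2.eq_swap⟩
          exact Finset.mem_union_right _ (hE2 ▸ Finset.mem_filter.mpr
            ⟨he, hπ1 _ h2, hπ1 _ h1⟩)
      · rw [hE2] at h
        obtain ⟨h1, h2⟩ := (Finset.mem_filter.mp h).2
        rcases hcl1 _ (hπ2 _ h1) _ (hπ2 _ h2) hπne with he | he
        · refine Finset.mem_image.mpr ⟨(π p.1, π p.2), ?_, rfl⟩
          exact Finset.mem_union_left _ (hE1 ▸ Finset.mem_filter.mpr
            ⟨he, hπ2 _ h1, hπ2 _ h2⟩)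
        · refine Finset.mem_image.mpr ⟨(π p.2, π p.1), ?_, Sym2.eq_swap⟩
          exact Finset.mem_union_left _ (hE1 ▸ Finset.mem_filter.mpr
            ⟨he, hπ2 _ h2, hπ2 _ h1⟩)
    · intro s hs
      rcases Finset.mem_image.mp hs with ⟨p, hp, rfl⟩
      have hne : p.1 ≠ p.2 := hloop p (hsub hp)
      have hsymne : π.symm p.1 ≠ π.symm p.2 := fun h => hne (π.symm.injective h)
      rcases Finset.mem_union.mp hp with h | h
      · rw [hE1] at h
        obtain ⟨h1, h2⟩ := (Finset.mem_filter.mp h).2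
        rcases hcl2 _ (hsym _ h1) _ (hsym _ h2) hsymne with he | he
        · refine Finset.mem_image.mpr ⟨(p.1, p.2), Finset.mem_image.mpr
            ⟨(π.symm p.1, π.symm p.2), ?_, by simp⟩, rfl⟩
          exact Finset.mem_union_right _ (hE2 ▸ Finset.mem_filter.mpr
            ⟨he, hsym _ h1, hsym _ h2⟩)
        · refine Finset.mem_image.mpr ⟨(p.2, p.1), Finset.mem_image.mpr
            ⟨(π.symm p.2, π.symm p.1), ?_, by simp⟩, Sym2.eq_swap⟩
          exact Finset.mem_union_right _ (hE2 ▸ Finset.mem_filter.mpr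
            ⟨he, hsym _ h2, hsym _ h1⟩)
      · rw [hE2] at h
        obtain ⟨h1, h2⟩ := (Finset.mem_filter.mp h).2
        have hs1 : ∀ i ∈ V2, π.symm i ∈ V1 := by
          intro i hi
          have : π (π.symm i) = i := π.apply_symm_apply i
          have := hπ2 (π.symm i)
          by_contra hc
          -- π.symm i ∉ V1. Show contradiction: need π.symm maps V2 to V1.
          have himg2 : V1.image π = V2 := by
            apply Finset.eq_of_subset_of_card_le
            · intro x hx
              rcases Finset.mem_image.mp hx with ⟨v, hv, rfl⟩
              exact hπ1 v hv
            · rw [Finset.card_image_of_injective _ π.injective]; omega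
          rw [← himg2] at hi
          rcases Finset.mem_image.mp hi with ⟨v, hv, hv2⟩
          rw [← hv2, Equiv.symm_apply_apply] at hc
          exact hc hv
        rcases hcl1 _ (hs1 _ h1) _ (hs1 _ h2) hsymne with he | he
        · refine Finset.mem_image.mpr ⟨(p.1, p.2), Finset.mem_image.mpr
            ⟨(π.symm p.1, π.symm p.2), ?_, by simp⟩, rfl⟩
          exact Finset.mem_union_left _ (hE1 ▸ Finset.mem_filter.mpr
            ⟨he, hs1 _ h1, hs1 _ h2⟩)
        · refine Finset.mem_image.mpr ⟨(p.2, p.1), Finset.mem_image.mpr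
            ⟨(π.symm p.2, π.symm p.1), ?_, by simp⟩, Sym2.eq_swap⟩
          exact Finset.mem_union_left _ (hE1 ▸ Finset.mem_filter.mpr
            ⟨he, hs1 _ h2, hs1 _ h1⟩)
  have hEsplit : E = (E \ (E1 ∪ E2)) ∪ (E1 ∪ E2) := by
    rw [Finset.sdiff_union_of_subset hsub]
  rw [hE', Finset.image_union, key]
  conv_rhs => rw [hEsplit, Finset.image_union]
end

section
/- Let T be a tournament on n ≥ 2 vertices (an oriented complete graph), let b be a vertex of minimal indegree with indeg(b) > 0, let I = In(b) and O = Out(b), and let x ∈ I. Then the indegree of x with respect to O is strictly greater than the outdegree of x with respect to I: indeg_O(x) ≥ outdeg_I(x) + 1. Consequently, flipping the edge (x,b) to (b,x) strictly decreases the number of directed 3-cycles of the tournament. -/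
variable {V : Type*} [Fintype V] [DecidableEq V]

/-- Indegree of a vertex in a tournament `r`. -/
def indeg (r : V → V → Bool) (v : V) : ℕ :=
  (Finset.univ.filter fun u => r u v = true).card

/-- Number of directed 3-cycles, counted as ordered triples `(u, v, w)` with
`u → v → w → u`. -/
def N3 (r : V → V → Bool) : ℕ :=
  (Finset.univ.filter fun t : V × V × V =>
    r t.1 t.2.1 = true ∧ r t.2.1 t.2.2 = true ∧ r t.2.2 t.1 = true).card

open Finset

lemma tri_filter_card (r : V → V → Bool) (x b : V) (hxb : x ≠ b)
    (hxbt : r x b = true) (hbx : r b x = false) (hirr : ∀ v, r v v = false) :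
    ((Finset.univ.filter fun t : V × V × V =>
        r t.1 t.2.1 = true ∧ r t.2.1 t.2.2 = true ∧ r t.2.2 t.1 = true).filter
      (fun t => (t.1 = x ∨ t.2.1 = x ∨ t.2.2 = x) ∧ (t.1 = b ∨ t.2.1 = b ∨ t.2.2 = b))).card
    = 3 * (Finset.univ.filter fun u => r b u = true ∧ r u x = true).card := by
  set B := Finset.univ.filter fun u => r b u = true ∧ r u x = true with hBdef
  have hBmem : ∀ w, w ∈ B ↔ r b w = true ∧ r w x = true := by
    intro w; simp [hBdef]
  have hBx : ∀ w ∈ B, w ≠ x := by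
    intro w hw h; subst h; have := (hBmem w).1 hw; simp [hirr] at this
  have hBb : ∀ w ∈ B, w ≠ b := by
    intro w hw h; subst h; have := (hBmem w).1 hw; simp [hirr] at this
  have hset : ((Finset.univ.filter fun t : V × V × V =>
        r t.1 t.2.1 = true ∧ r t.2.1 t.2.2 = true ∧ r t.2.2 t.1 = true).filter
      (fun t => (t.1 = x ∨ t.2.1 = x ∨ t.2.2 = x) ∧ (t.1 = b ∨ t.2.1 = b ∨ t.2.2 = b)))
      = B.image (fun w => (x, b, w)) ∪ B.image (fun w => (b, w, x))
        ∪ B.image (fun w => (w, x, b)) := by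
    ext ⟨t1, t2, t3⟩
    simp only [mem_filter, mem_univ, true_and, mem_union, mem_image, hBmem,
      Prod.mk.injEq]
    constructor
    · rintro ⟨⟨h12, h23, h31⟩, hqx, hqb⟩
      rcases hqx with rfl | rfl | rfl <;> rcases hqb with h | h | h <;>
        first
        | (exact absurd h hxb.symm)
        | (exact absurd h hxb)
        | (subst h; simp_all)
    · rintro ((⟨w, ⟨hw1, hw2⟩, rfl, rfl, rfl⟩ | ⟨w, ⟨hw1, hw2⟩, rfl, rfl, rfl⟩) |
        ⟨w, ⟨hw1, hw2⟩, rfl, rfl, rfl⟩) <;> simp_all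
  rw [hset]
  have hinj1 : Set.InjOn (fun w : V => ((x, b, w) : V × V × V)) B := by
    intro a _ c _ h; simpa using h
  have hinj2 : Set.InjOn (fun w : V => ((b, w, x) : V × V × V)) B := by
    intro a _ c _ h; simpa using h
  have hinj3 : Set.InjOn (fun w : V => ((w, x, b) : V × V × V)) B := by
    intro a _ c _ h; simpa using h
  have hd12 : Disjoint (B.image (fun w => ((x, b, w) : V × V × V)))
      (B.image (fun w => ((b, w, x) : V × V × V))) := by
    rw [Finset.disjoint_left]
    rintro t ht1 ht2
    simp only [mem_image] at ht1 ht2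
    obtain ⟨w, hw, rfl⟩ := ht1
    obtain ⟨w', hw', heq⟩ := ht2
    exact hxb ((congrArg Prod.fst heq).symm)
  have hd13 : Disjoint (B.image (fun w => ((x, b, w) : V × V × V)) ∪
      B.image (fun w => ((b, w, x) : V × V × V)))
      (B.image (fun w => ((w, x, b) : V × V × V))) := by
    rw [Finset.disjoint_left]
    rintro t ht1 ht2
    simp only [mem_union, mem_image] at ht1 ht2
    obtain ⟨w', hw', rfl⟩ := ht2
    rcases ht1 with ⟨w, hw, heq⟩ | ⟨w, hw, heq⟩
    · exact hBx w' hw' (congrArg Prod.fst heq).symm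
    · exact hBb w' hw' (congrArg Prod.fst heq).symm
  rw [Finset.card_union_of_disjoint hd13, Finset.card_union_of_disjoint hd12,
    Finset.card_image_of_injOn hinj1, Finset.card_image_of_injOn hinj2,
    Finset.card_image_of_injOn hinj3]
  ring

/-- in a tournament on `n ≥ 2` vertices, let `b` be a vertex of minimal
indegree with `indeg(b) > 0`, and let `x` be a vertex with an edge into `b`.  Then
`indeg_O(x) ≥ outdeg_I(x) + 1`, where `I = In(b)` and `O = Out(b)`; consequently flipping the
edge `(x, b)` to `(b, x)` strictly decreases the number of directed 3-cycles. -/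
theorem min_indegree_flip_decreases_cycles (r : V → V → Bool)
    (hn : 2 ≤ Fintype.card V)
    (hirr : ∀ v, r v v = false)
    (htour : ∀ u v, u ≠ v → r u v = !r v u)
    (b : V) (hmin : ∀ v, indeg r b ≤ indeg r v) (hpos : 0 < indeg r b)
    (x : V) (hx : r x b = true)
    (r' : V → V → Bool)
    (hr' : r' = fun u v =>
      if u = x ∧ v = b then false else if u = b ∧ v = x then true else r u v) :
    (Finset.univ.filter fun u => r x u = true ∧ r u b = true).card + 1
      ≤ (Finset.univ.filter fun u => r b u = true ∧ r u x = true).card ∧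
    N3 r' < N3 r := by
  have hxb : x ≠ b := by rintro rfl; rw [hirr] at hx; exact Bool.false_ne_true hx
  have hbx : r b x = false := by
    have := htour b x (Ne.symm hxb); rw [this, hx]; rfl
  have htot : ∀ u v : V, u ≠ v → r u v = true ∨ r v u = true := by
    intro u v h; rw [htour u v h]; cases r v u <;> simp
  have hanti : ∀ u v : V, u ≠ v → r u v = true → r v u = false := by
    intro u v h huv
    have := htour v u (Ne.symm h); rw [this, huv]; rfl
  -- Part 1
  have key : (Finset.univ.filter fun u => r x u = true ∧ r u b = true).card + 1
      ≤ (Finset.univ.filter fun u => r b u = true ∧ r u x = true).card := by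
    have h1 : (Finset.univ.filter fun u => r u x = true)
        = (Finset.univ.filter fun u => r u x = true ∧ r u b = true)
          ∪ (Finset.univ.filter fun u => r b u = true ∧ r u x = true) := by
      ext u
      simp only [mem_filter, mem_union, mem_univ, true_and]
      constructor
      · intro hu
        have hub : u ≠ b := by
          rintro rfl; rw [hbx] at hu; exact Bool.false_ne_true hu
        rcases htot u b hub with h | h
        · exact Or.inl ⟨hu, h⟩
        · exact Or.inr ⟨h, hu⟩
      · rintro (⟨h, _⟩ | ⟨_, h⟩) <;> exact h
    have hd1 : Disjoint (Finset.univ.filter fun u => r u x = true ∧ r u b = true)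
        (Finset.univ.filter fun u => r b u = true ∧ r u x = true) := by
      rw [Finset.disjoint_left]
      intro u h1 h2
      simp only [mem_filter, mem_univ, true_and] at h1 h2
      have hub : u ≠ b := by
        rintro rfl; rw [hirr] at h1; exact Bool.false_ne_true h1.2
      have := hanti u b hub h1.2
      rw [this] at h2; exact Bool.false_ne_true h2.1
    have h2 : (Finset.univ.filter fun u => r u b = true)
        = ((Finset.univ.filter fun u => r u x = true ∧ r u b = true)
          ∪ (Finset.univ.filter fun u => r x u = true ∧ r u b = true)) ∪ {x} := by
      ext u
      simp only [mem_filter, mem_union, mem_univ, true_and, mem_singleton]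
      constructor
      · intro hu
        by_cases hux : u = x
        · exact Or.inr hux
        · rcases htot u x hux with h | h
          · exact Or.inl (Or.inl ⟨h, hu⟩)
          · exact Or.inl (Or.inr ⟨h, hu⟩)
      · rintro ((⟨_, h⟩ | ⟨_, h⟩) | rfl)
        · exact h
        · exact h
        · exact hx
    have hd2 : Disjoint (Finset.univ.filter fun u => r u x = true ∧ r u b = true)
        (Finset.univ.filter fun u => r x u = true ∧ r u b = true) := by
      rw [Finset.disjoint_left]
      intro u h1 h2
      simp only [mem_filter, mem_univ, true_and] at h1 h2
      have hux : u ≠ x := by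
        rintro rfl; rw [hirr] at h1; exact Bool.false_ne_true h1.1
      have := hanti u x hux h1.1
      rw [hanti x u (Ne.symm hux) h2.1] at h1
      exact Bool.false_ne_true h1.1
    have hd3 : Disjoint ((Finset.univ.filter fun u => r u x = true ∧ r u b = true)
          ∪ (Finset.univ.filter fun u => r x u = true ∧ r u b = true)) ({x} : Finset V) := by
      rw [Finset.disjoint_right]
      intro u hu h
      simp only [mem_singleton] at hu; subst hu
      simp only [mem_union, mem_filter, mem_univ, true_and, hirr] at h
      rcases h with ⟨h, _⟩ | ⟨h, _⟩ <;> exact Bool.false_ne_true h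
    have hcard1 : indeg r x = (Finset.univ.filter fun u => r u x = true ∧ r u b = true).card
        + (Finset.univ.filter fun u => r b u = true ∧ r u x = true).card := by
      rw [indeg, h1, Finset.card_union_of_disjoint hd1]
    have hcard2 : indeg r b = ((Finset.univ.filter fun u => r u x = true ∧ r u b = true).card
        + (Finset.univ.filter fun u => r x u = true ∧ r u b = true).card) + 1 := by
      rw [indeg, h2, Finset.card_union_of_disjoint hd3, Finset.card_union_of_disjoint hd2,
        Finset.card_singleton]
    have := hmin x
    omega
  refine ⟨key, ?_⟩
  -- Part 2
  have hirr' : ∀ v, r' v v = false := by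
    intro v
    rw [hr']
    simp only
    rw [if_neg, if_neg]
    · exact hirr v
    · rintro ⟨rfl, rfl⟩; exact hxb rfl
    · rintro ⟨rfl, rfl⟩; exact hxb rfl
  have hr'xb : r' x b = false := by rw [hr']; simp
  have hr'bx : r' b x = true := by
    rw [hr']; simp [Ne.symm hxb]
  have hr'eq : ∀ u v : V, ¬(u = x ∧ v = b) → ¬(u = b ∧ v = x) → r' u v = r u v := by
    intro u v h1 h2
    rw [hr']; simp only
    rw [if_neg h1, if_neg h2]
  set Q : V × V × V → Prop := fun t =>
    (t.1 = x ∨ t.2.1 = x ∨ t.2.2 = x) ∧ (t.1 = b ∨ t.2.1 = b ∨ t.2.2 = b) with hQdef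
  have hsplit : ∀ s : V → V → Bool, N3 s =
      ((Finset.univ.filter fun t : V × V × V =>
        s t.1 t.2.1 = true ∧ s t.2.1 t.2.2 = true ∧ s t.2.2 t.1 = true).filter Q).card
      + ((Finset.univ.filter fun t : V × V × V =>
        s t.1 t.2.1 = true ∧ s t.2.1 t.2.2 = true ∧ s t.2.2 t.1 = true).filter
        (fun t => ¬ Q t)).card := by
    intro s
    rw [N3, ← Finset.card_filter_add_card_filter_not (p := Q)]
  -- Triples not containing both x and b are unchanged
  have hsame : ((Finset.univ.filter fun t : V × V × V =>
        r' t.1 t.2.1 = true ∧ r' t.2.1 t.2.2 = true ∧ r' t.2.2 t.1 = true).filter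
        (fun t => ¬ Q t))
      = ((Finset.univ.filter fun t : V × V × V =>
        r t.1 t.2.1 = true ∧ r t.2.1 t.2.2 = true ∧ r t.2.2 t.1 = true).filter
        (fun t => ¬ Q t)) := by
    ext ⟨t1, t2, t3⟩
    simp only [mem_filter, mem_univ, true_and, hQdef]
    have hedge : ¬ Q (t1, t2, t3) →
        (r' t1 t2 = r t1 t2 ∧ r' t2 t3 = r t2 t3 ∧ r' t3 t1 = r t3 t1) := by
      intro hq
      simp only [hQdef, not_and_or, not_or] at hq
      refine ⟨?_, ?_, ?_⟩ <;> (apply hr'eq) <;> rintro ⟨rfl, rfl⟩ <;> tauto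
    constructor
    · rintro ⟨hp, hq⟩
      obtain ⟨e1, e2, e3⟩ := hedge hq
      rw [e1, e2, e3] at hp
      exact ⟨hp, hq⟩
    · rintro ⟨hp, hq⟩
      obtain ⟨e1, e2, e3⟩ := hedge hq
      rw [← e1, ← e2, ← e3] at hp
      exact ⟨hp, hq⟩
  have hQ' : ∀ t : V × V × V, Q t ↔
      ((t.1 = b ∨ t.2.1 = b ∨ t.2.2 = b) ∧ (t.1 = x ∨ t.2.1 = x ∨ t.2.2 = x)) := by
    intro t; rw [hQdef]; exact and_comm
  have hcardr : ((Finset.univ.filter fun t : V × V × V =>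
        r t.1 t.2.1 = true ∧ r t.2.1 t.2.2 = true ∧ r t.2.2 t.1 = true).filter Q).card
      = 3 * (Finset.univ.filter fun u => r b u = true ∧ r u x = true).card :=
    tri_filter_card r x b hxb hx hbx hirr
  have hAset : (Finset.univ.filter fun u => r' x u = true ∧ r' u b = true)
      = (Finset.univ.filter fun u => r x u = true ∧ r u b = true) := by
    ext u
    simp only [mem_filter, mem_univ, true_and]
    by_cases hub : u = b
    · subst hub
      rw [hr'xb, hirr]
      simp
    · by_cases hux : u = x
      · subst hux
        rw [hirr, hirr']
        simp
      · rw [hr'eq x u (by tauto) (by tauto), hr'eq u b (by tauto) (by tauto)]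
  have hcardr' : ((Finset.univ.filter fun t : V × V × V =>
        r' t.1 t.2.1 = true ∧ r' t.2.1 t.2.2 = true ∧ r' t.2.2 t.1 = true).filter Q).card
      = 3 * (Finset.univ.filter fun u => r x u = true ∧ r u b = true).card := by
    have := tri_filter_card r' b x (Ne.symm hxb) hr'bx hr'xb hirr'
    rw [← hAset]
    rw [← this]
    congr 1
    apply Finset.filter_congr
    intro t _
    simp only [hQ' t, hQdef]
    tauto
  have h3 : N3 r' = 3 * (Finset.univ.filter fun u => r x u = true ∧ r u b = true).card
      + ((Finset.univ.filter fun t : V × V × V =>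
        r t.1 t.2.1 = true ∧ r t.2.1 t.2.2 = true ∧ r t.2.2 t.1 = true).filter
        (fun t => ¬ Q t)).card := by
    rw [hsplit r', hcardr', hsame]
  have h4 : N3 r = 3 * (Finset.univ.filter fun u => r b u = true ∧ r u x = true).card
      + ((Finset.univ.filter fun t : V × V × V =>
        r t.1 t.2.1 = true ∧ r t.2.1 t.2.2 = true ∧ r t.2.2 t.1 = true).filter
        (fun t => ¬ Q t)).card := by
    rw [hsplit r, hcardr]
  omega
end

section
/- Every finite tournament can be transformed into a transitive tournament (directed acyclic orientation of the complete graph) by a sequence of at most (n² − n)/4 single edge flips, where n is the number of vertices, such that each individual flip strictly decreases the number of directed 3-cycles. -/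
/-!
Flipping an arc `a → b` of a tournament destroys the `3 · #{w | b → w → a}` ordered 3-cycles
through it and creates `3 · #{w | a → w → b}` new ones. Counting the in-neighbours of `a` and `b`
shows that the first number exceeds the second as soon as `indeg b ≤ indeg a`. Hence, if `b` has
minimal in-degree, its incoming arcs can be flipped one by one, each flip strictly decreasing the
number of 3-cycles, until `b` is a source. Recursing on the remaining vertices yields a transitive
tournament. Since the in-degrees in a tournament on `k` vertices sum to `k(k-1)/2`, the minimal
one is at most `(k-1)/2`, so the number of flips is at most `∑_{k ≤ n} (k-1)/2 ≤ (n² - n)/4`.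
-/

variable {V : Type*} [Fintype V] [DecidableEq V]

/-- A single edge flip that strictly decreases the number of directed 3-cycles. -/
def Flip (r r' : V → V → Bool) : Prop :=
  ∃ x y : V, r x y = true ∧
    r' = (fun u v =>
      if u = x ∧ v = y then false else if u = y ∧ v = x then true else r u v) ∧
    N3 r' < N3 r

open Finset

section Tournament

variable {α : Type*} {r : α → α → Bool}

structure IsTournament (r : α → α → Bool) : Prop where
  irrefl : ∀ v, r v v = false
  eq_not_of_ne : ∀ u v, u ≠ v → r u v = !r v u

namespace IsTournament

theorem ne_of_adj (ht : IsTournament r) {u v : α} (h : r u v = true) : u ≠ v := by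
  rintro rfl
  simp [ht.irrefl] at h

theorem not_adj_of_adj (ht : IsTournament r) {u v : α} (h : r u v = true) : r v u = false := by
  simpa [h] using ht.eq_not_of_ne v u (ht.ne_of_adj h).symm

end IsTournament

def indegIn (s : Finset α) (r : α → α → Bool) (x : α) : ℕ := #{u ∈ s | r u x = true}

theorem indegIn_add_card_paths {s : Finset α} {a b : α} (ht : IsTournament r) (ha : a ∈ s)
    (h : r a b = true) :
    indegIn s r a + #{w ∈ s | r a w = true ∧ r w b = true} + 1 =
      indegIn s r b + #{w ∈ s | r b w = true ∧ r w a = true} := by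
  classical
  have hpoint : ∀ w, ((if r w a = true then 1 else 0) +
      (if r a w = true ∧ r w b = true then 1 else 0) + if w = a then 1 else 0) =
      (if r w b = true then 1 else 0) + if r b w = true ∧ r w a = true then 1 else 0 := by
    intro w
    have := ht.not_adj_of_adj h
    grind [ht.irrefl, ht.eq_not_of_ne]
  have := sum_congr rfl fun w (_ : w ∈ s) => hpoint w
  simpa only [indegIn, sum_add_distrib, sum_ite_eq', ha, if_true, ← card_filter] using this

theorem two_mul_sum_indegIn (ht : IsTournament r) (s : Finset α) :
    2 * ∑ x ∈ s, indegIn s r x = #s * (#s - 1) := by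
  classical
  have hpair : ∀ x ∈ s,
      ∑ u ∈ s, ((if r u x = true then 1 else 0) + if r x u = true then 1 else 0) = #s - 1 := by
    intro x hx
    rw [← card_erase_of_mem hx, ← filter_ne' s x, card_filter]
    refine sum_congr rfl fun u _ => ?_
    by_cases hux : u = x
    · simp [hux, ht.irrefl]
    · cases hxu : r x u <;> simp [ht.eq_not_of_ne u x hux, hxu, hux]
  calc 2 * ∑ x ∈ s, indegIn s r x
      = ∑ x ∈ s, ∑ u ∈ s, (if r u x = true then 1 else 0) +
          ∑ x ∈ s, ∑ u ∈ s, (if r x u = true then 1 else 0) := by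
        simp only [two_mul, indegIn, card_filter]
        rw [sum_comm (f := fun x u => if r x u = true then 1 else 0)]
    _ = ∑ _x ∈ s, (#s - 1) := by
        rw [← sum_add_distrib]
        exact sum_congr rfl fun x hx => by rw [← sum_add_distrib, hpair x hx]
    _ = #s * (#s - 1) := by simp

theorem two_mul_indegIn_lt_card {s : Finset α} {b : α} (ht : IsTournament r) (hb : b ∈ s)
    (hmin : ∀ x ∈ s, indegIn s r b ≤ indegIn s r x) : 2 * indegIn s r b < #s := by
  have hsum : #s * indegIn s r b ≤ ∑ x ∈ s, indegIn s r x := by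
    simpa using card_nsmul_le_sum s _ _ hmin
  have hmul : #s * (2 * indegIn s r b) ≤ #s * (#s - 1) := by
    rw [← two_mul_sum_indegIn ht s]
    linarith
  have hpos : 0 < #s := card_pos.mpr ⟨b, hb⟩
  have := Nat.le_of_mul_le_mul_left hmul hpos
  omega

/-- In the algorithm, the vertices outside `s` have already been made sources, so no arc leaves
`s`. -/
def IsOutClosed (r : α → α → Bool) (s : Finset α) : Prop :=
  ∀ x ∈ s, ∀ w, r x w = true → w ∈ s

def AgreeOutside (s : Finset α) (r r' : α → α → Bool) : Prop :=
  ∀ u v, u ∉ s ∨ v ∉ s → r' u v = r u v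

theorem IsOutClosed.of_agreeOutside {s : Finset α} {r' : α → α → Bool} (hs : IsOutClosed r s)
    (h : AgreeOutside s r r') : IsOutClosed r' s := by
  intro x hx w hxw
  by_contra hw
  rw [h x w (.inr hw)] at hxw
  exact hw (hs x hx w hxw)

theorem card_paths_lt_of_indegIn_le [Fintype α] {s : Finset α} {a b : α} (ht : IsTournament r)
    (hs : IsOutClosed r s) (ha : a ∈ s) (h : r a b = true)
    (hd : indegIn s r b ≤ indegIn s r a) :
    #{w | r a w = true ∧ r w b = true} < #{w | r b w = true ∧ r w a = true} := by
  have hrestrict : ∀ c ∈ s, ∀ d,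
      #{w | r c w = true ∧ r w d = true} = #{w ∈ s | r c w = true ∧ r w d = true} :=
    fun c hc d => congr_arg card <| by ext w; simpa using fun hcw _ => hs c hc w hcw
  rw [hrestrict a ha, hrestrict b (hs a ha b h)]
  have := indegIn_add_card_paths ht ha h
  omega

def flipEdge [DecidableEq α] (a b : α) (r : α → α → Bool) : α → α → Bool :=
  fun u v => if u = a ∧ v = b then false else if u = b ∧ v = a then true else r u v

theorem IsTournament.flipEdge [DecidableEq α] {a b : α} (ht : IsTournament r) (hab : a ≠ b) :
    IsTournament (flipEdge a b r) where
  irrefl v := by grind [flipEdge, ht.irrefl]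
  eq_not_of_ne u v huv := by grind [flipEdge, ht.eq_not_of_ne u v huv]

theorem agreeOutside_flipEdge [DecidableEq α] {s : Finset α} {a b : α} (ha : a ∈ s)
    (hb : b ∈ s) : AgreeOutside s r (flipEdge a b r) := by
  intro u v huv
  simp only [flipEdge]
  grind

theorem indegIn_flipEdge_add_one [DecidableEq α] {s : Finset α} {a b : α} (ha : a ∈ s)
    (h : r a b = true) : indegIn s (flipEdge a b r) b + 1 = indegIn s r b := by
  have : ({u ∈ s | flipEdge a b r u b = true} : Finset α) = {u ∈ s | r u b = true}.erase a := by
    ext u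
    simp only [mem_filter, mem_erase, flipEdge]
    grind
  rw [indegIn, indegIn, this, card_erase_add_one (mem_filter.mpr ⟨ha, h⟩)]

theorem indegIn_le_indegIn_flipEdge [DecidableEq α] {s : Finset α} {a b x : α} (hxb : x ≠ b) :
    indegIn s r x ≤ indegIn s (flipEdge a b r) x := by
  apply card_le_card
  intro u
  simp only [mem_filter, flipEdge]
  grind

theorem exists_rank_of_source [DecidableEq α] {s : Finset α} {b : α} {g : α → ℕ}
    (hb : ∀ u ∈ s, r u b = false)
    (hg : ∀ u ∈ s.erase b, ∀ v ∈ s.erase b, r u v = true → g u < g v) :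
    ∃ g' : α → ℕ, ∀ u ∈ s, ∀ v ∈ s, r u v = true → g' u < g' v := by
  refine ⟨fun v => if v = b then 0 else g v + 1, fun u hu v hv huv => ?_⟩
  by_cases hvb : v = b
  · simp [hvb, hb u hu] at huv
  by_cases hub : u = b
  · simp [hub, hvb]
  · simpa [hub, hvb] using hg u (mem_erase.mpr ⟨hub, hu⟩) v (mem_erase.mpr ⟨hvb, hv⟩) huv

end Tournament

abbrev IsCyclicTriple (r : V → V → Bool) (t : V × V × V) : Prop :=
  r t.1 t.2.1 = true ∧ r t.2.1 t.2.2 = true ∧ r t.2.2 t.1 = true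

abbrev UsesArc (a b : V) (t : V × V × V) : Prop :=
  (t.1 = a ∧ t.2.1 = b) ∨ (t.2.1 = a ∧ t.2.2 = b) ∨ (t.2.2 = a ∧ t.1 = b)

theorem card_cyclicTriple_usesArc {r : V → V → Bool} {a b : V} (hab : a ≠ b)
    (h : r a b = true) :
    #{t | IsCyclicTriple r t ∧ UsesArc a b t} = 3 * #{w | r b w = true ∧ r w a = true} := by
  set D : Finset V := {w | r b w = true ∧ r w a = true}
  have hrotations : ({t | IsCyclicTriple r t ∧ UsesArc a b t} : Finset (V × V × V)) =
      D.image (fun w => (a, b, w)) ∪ D.image (fun w => (w, a, b)) ∪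
        D.image (fun w => (b, w, a)) := by
    ext ⟨x, y, z⟩
    simp only [mem_filter, mem_univ, true_and, mem_union, mem_image, Prod.mk.injEq]
    grind
  rw [hrotations, card_union_of_disjoint, card_union_of_disjoint, card_image_of_injective,
    card_image_of_injective, card_image_of_injective]
  · ring
  all_goals first
    | (intro w w' h; simpa using h)
    | (simp only [disjoint_left, mem_union, mem_image]; grind)

theorem N3_eq_card_usesArc_add (r : V → V → Bool) (a b : V) :
    N3 r = #{t | IsCyclicTriple r t ∧ UsesArc a b t} +
      #{t | IsCyclicTriple r t ∧ ¬UsesArc a b t} := by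
  unfold N3
  rw [← card_filter_add_card_filter_not (p := UsesArc a b), filter_filter, filter_filter]

theorem N3_flipEdge_add {r : V → V → Bool} {a b : V} (ht : IsTournament r) (h : r a b = true) :
    N3 (flipEdge a b r) + 3 * #{w | r b w = true ∧ r w a = true} =
      N3 r + 3 * #{w | r a w = true ∧ r w b = true} := by
  have hab := ht.ne_of_adj h
  have hba := ht.not_adj_of_adj h
  have hunchanged : #{t | IsCyclicTriple (flipEdge a b r) t ∧ ¬UsesArc b a t} =
      #{t | IsCyclicTriple r t ∧ ¬UsesArc a b t} := by
    congr 1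
    ext ⟨x, y, z⟩
    simp only [mem_filter, mem_univ, true_and, IsCyclicTriple, UsesArc, flipEdge]
    grind
  have hpaths : #{w | flipEdge a b r a w = true ∧ flipEdge a b r w b = true} =
      #{w | r a w = true ∧ r w b = true} := by
    congr 1
    ext w
    simp only [mem_filter, mem_univ, true_and, flipEdge]
    grind [ht.irrefl]
  rw [N3_eq_card_usesArc_add _ b a, N3_eq_card_usesArc_add r a b,
    card_cyclicTriple_usesArc hab.symm (by simp [flipEdge, hab.symm]),
    card_cyclicTriple_usesArc hab h, hunchanged, hpaths]
  ring

theorem flip_flipEdge_of_indegIn_le {r : V → V → Bool} {s : Finset V} {a b : V}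
    (ht : IsTournament r) (hs : IsOutClosed r s) (ha : a ∈ s) (h : r a b = true)
    (hd : indegIn s r b ≤ indegIn s r a) :
    Flip r (flipEdge a b r) := by
  refine ⟨a, b, h, rfl, ?_⟩
  have := N3_flipEdge_add ht h
  have := card_paths_lt_of_indegIn_le ht hs ha h hd
  omega

def FlipPath (r r' : V → V → Bool) (n : ℕ) : Prop :=
  ∃ l : List (V → V → Bool), l.length = n ∧ List.IsChain Flip (r :: l) ∧
    (r :: l).getLast (List.cons_ne_nil _ _) = r'

namespace FlipPath

variable {r₁ r₂ r₃ : V → V → Bool} {m n : ℕ}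

theorem refl (r : V → V → Bool) : FlipPath r r 0 := ⟨[], rfl, .singleton r, rfl⟩

theorem cons (h : Flip r₁ r₂) (hp : FlipPath r₂ r₃ n) : FlipPath r₁ r₃ (n + 1) := by
  obtain ⟨l, rfl, hc, rfl⟩ := hp
  exact ⟨r₂ :: l, rfl, hc.cons_cons h, by rw [List.getLast_cons_cons]⟩

theorem trans (h₁ : FlipPath r₁ r₂ m) (h₂ : FlipPath r₂ r₃ n) : FlipPath r₁ r₃ (m + n) := by
  obtain ⟨l, rfl, hc, rfl⟩ := h₁
  induction l generalizing r₁ with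
  | nil => simpa using h₂
  | cons r l ih =>
    rw [List.isChain_cons_cons] at hc
    rw [List.getLast_cons_cons] at h₂
    simpa [Nat.add_right_comm] using (ih hc.2 h₂).cons hc.1

end FlipPath

theorem exists_flipPath_indegIn_eq_zero {s : Finset V} {b : V} (hb : b ∈ s)
    (r : V → V → Bool) (ht : IsTournament r) (hs : IsOutClosed r s)
    (hmin : ∀ x ∈ s, indegIn s r b ≤ indegIn s r x) :
    ∃ r', FlipPath r r' (indegIn s r b) ∧ IsTournament r' ∧ AgreeOutside s r r' ∧
      indegIn s r' b = 0 := by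
  generalize hk : indegIn s r b = k
  induction k generalizing r with
  | zero => exact ⟨r, .refl r, ht, fun _ _ _ => rfl, hk⟩
  | succ k ih =>
    obtain ⟨a, ha⟩ : ({u ∈ s | r u b = true} : Finset V).Nonempty := by
      rw [← card_pos]
      unfold indegIn at hk
      omega
    rw [mem_filter] at ha
    have hflip := flip_flipEdge_of_indegIn_le ht hs ha.1 ha.2 (hmin a ha.1)
    have hagree := agreeOutside_flipEdge (r := r) ha.1 hb
    have hindeg_b := indegIn_flipEdge_add_one ha.1 ha.2
    have hmin' : ∀ x ∈ s, indegIn s (flipEdge a b r) b ≤ indegIn s (flipEdge a b r) x := by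
      intro x hx
      by_cases hxb : x = b
      · rw [hxb]
      · have := hmin x hx
        have := indegIn_le_indegIn_flipEdge (r := r) (s := s) (a := a) hxb
        omega
    obtain ⟨r', hp, ht', hagree', h0⟩ :=
      ih _ (ht.flipEdge (ht.ne_of_adj ha.2)) (hs.of_agreeOutside hagree) hmin' (by omega)
    refine ⟨r', hp.cons hflip, ht', fun u v huv => ?_, h0⟩
    rw [hagree' u v huv, hagree u v huv]

theorem exists_flipPath_acyclicOn (s : Finset V) (r : V → V → Bool) (ht : IsTournament r)
    (hs : IsOutClosed r s) :
    ∃ r' n, 4 * n + #s ≤ #s ^ 2 ∧ FlipPath r r' n ∧ AgreeOutside s r r' ∧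
      ∃ g : V → ℕ, ∀ u ∈ s, ∀ v ∈ s, r' u v = true → g u < g v := by
  induction s using Finset.strongInduction generalizing r with
  | H s ih =>
  rcases s.eq_empty_or_nonempty with rfl | hne
  · exact ⟨r, 0, by simp, .refl r, fun _ _ _ => rfl, fun _ => 0, by simp⟩
  obtain ⟨b, hb, hmin⟩ := exists_min_image s (indegIn s r) hne
  obtain ⟨r₁, hp₁, ht₁, hagree₁, hsource⟩ := exists_flipPath_indegIn_eq_zero hb r ht hs hmin
  have hnot_to_b : ∀ u ∈ s, r₁ u b = false := by
    simp only [indegIn, card_eq_zero, filter_eq_empty_iff, Bool.not_eq_true] at hsource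
    exact hsource
  have hs₁ : IsOutClosed r₁ (s.erase b) := by
    intro x hx w hxw
    refine mem_erase.mpr ⟨?_, hs.of_agreeOutside hagree₁ x (mem_of_mem_erase hx) w hxw⟩
    rintro rfl
    simp [hnot_to_b x (mem_of_mem_erase hx)] at hxw
  obtain ⟨r₂, n, hn, hp₂, hagree₂, g, hg⟩ := ih _ (erase_ssubset hb) r₁ ht₁ hs₁
  have hagree : AgreeOutside s r r₂ := fun u v huv => by
    rw [← hagree₁ u v huv, hagree₂ u v (huv.imp (mt mem_of_mem_erase) (mt mem_of_mem_erase))]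
  obtain ⟨g', hg'⟩ := exists_rank_of_source
    (fun u hu => (hagree₂ u b (.inr (notMem_erase b s))).trans (hnot_to_b u hu)) hg
  refine ⟨r₂, indegIn s r b + n, ?_, hp₁.trans hp₂, hagree, g', hg'⟩
  have := two_mul_indegIn_lt_card ht hb hmin
  obtain ⟨k, hk⟩ := Nat.exists_eq_add_one_of_ne_zero (card_pos.mpr hne).ne'
  rw [card_erase_of_mem hb, hk, Nat.add_sub_cancel] at hn
  rw [hk] at this ⊢
  nlinarith

/-- Theorem A.3: every finite tournament can be transformed into a transitive
tournament (a directed acyclic orientation of the complete graph, i.e. one arising from a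
linear order on the vertices) by a sequence of at most `(n² − n)/4` single edge flips, each of
which strictly decreases the number of directed 3-cycles. -/
theorem tournament_to_transitive (r : V → V → Bool)
    (hirr : ∀ v, r v v = false)
    (htour : ∀ u v, u ≠ v → r u v = !r v u) :
    ∃ l : List (V → V → Bool),
      l.length ≤ (Fintype.card V ^ 2 - Fintype.card V) / 4 ∧
      List.Chain Flip r l ∧
      ∃ g : V → ℕ, ∀ u v : V,
        (r :: l).getLast (List.cons_ne_nil _ _) u v = true → g u < g v := by
  obtain ⟨r', n, hn, ⟨l, rfl, hchain, rfl⟩, -, g, hg⟩ :=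
    exists_flipPath_acyclicOn univ r ⟨hirr, htour⟩ (fun _ _ w _ => mem_univ w)
  refine ⟨l, ?_, hchain, g, fun u v => hg u (mem_univ u) v (mem_univ v)⟩
  rw [card_univ] at hn
  omega
end
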